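/- arXiv:2306.03249 — 2 statements merged into one kernel-verified Lean document; each statement's English description precedes it below -/
import Mathlib

section
/- Let r, s : ℝ^L × ℝ^D → ℝ be twice continuously differentiable and let β# : ℝ^L → ℝ^D be differentiable with ∇₂s(θ, β#(θ)) = 0 for all θ and ∇₂₂²s(θ, β#(θ)) invertible (so that the Jacobian J# := ∂β#/∂θ satisfies J# · ∇₂₂²s(θ, β#) + ∇₁₂²s(θ, β#) = 0). Assume: ∇₂s(θ, ·) is L₂ˢ-Lipschitz in β, ∇₂₂²s(θ, ·) is L₂₂ˢ-Lipschitz in β, ∇₁₂²r(θ, ·) is L₁₂ʳ-Lipschitz in β, and that the shared second-derivative condition ∇₁₂²r(θ, β#(θ)) = ∇₁₂²s(θ, β#(θ)) holds. Let β^⟨I⟩ : ℝ^L → ℝ^D be differentiable with Jacobian J^⟨I⟩ := ∂β^⟨I⟩/∂θ satisfying ‖J^⟨I⟩‖₂ ≤ J_M. Define the target gradient g# := ∇₁r(θ, β#(θ)) and the automatic (network) gradient g̃^⟨I⟩ := ∇₁r(θ, β^⟨I⟩) + J^⟨I⟩ · ∇₂s(θ, β^⟨I⟩). Then ‖g̃^⟨I⟩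 − g#‖₂ ≤ (L₁₂ʳ/2 + J_M L₂₂ˢ/2) ‖β^⟨I⟩ − β#‖₂² + L₂ˢ ‖J^⟨I⟩ − J#‖₂ ‖β^⟨I⟩ − β#‖₂. -/
/-- `∇₁f(θ, β)`: gradient of `f` with respect to its first argument. -/
noncomputable def grad1 {L D : ℕ}
    (f : EuclideanSpace ℝ (Fin L) × EuclideanSpace ℝ (Fin D) → ℝ)
    (θ : EuclideanSpace ℝ (Fin L)) (β : EuclideanSpace ℝ (Fin D)) :
    EuclideanSpace ℝ (Fin L) :=
  gradient (fun θ' => f (θ', β)) θ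

/-- `∇₂f(θ, β)`: gradient of `f` with respect to its second argument. -/
noncomputable def grad2 {L D : ℕ}
    (f : EuclideanSpace ℝ (Fin L) × EuclideanSpace ℝ (Fin D) → ℝ)
    (θ : EuclideanSpace ℝ (Fin L)) (β : EuclideanSpace ℝ (Fin D)) :
    EuclideanSpace ℝ (Fin D) :=
  gradient (fun β' => f (θ, β')) β

/-- `∇₂₂²f(θ, β)`: the Hessian in the second argument, as a continuous linear map. -/
noncomputable def hess22 {L D : ℕ}
    (f : EuclideanSpace ℝ (Fin L) × EuclideanSpace ℝ (Fin D) → ℝ)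
    (θ : EuclideanSpace ℝ (Fin L)) (β : EuclideanSpace ℝ (Fin D)) :
    EuclideanSpace ℝ (Fin D) →L[ℝ] EuclideanSpace ℝ (Fin D) :=
  fderiv ℝ (fun β' => grad2 f θ β') β

/-- `∇₁₂²f(θ, β)`: the mixed second derivative, i.e. the derivative in `θ` of
`θ' ↦ ∇₂f(θ', β)`. -/
noncomputable def mixed12 {L D : ℕ}
    (f : EuclideanSpace ℝ (Fin L) × EuclideanSpace ℝ (Fin D) → ℝ)
    (θ : EuclideanSpace ℝ (Fin L)) (β : EuclideanSpace ℝ (Fin D)) :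
    EuclideanSpace ℝ (Fin L) →L[ℝ] EuclideanSpace ℝ (Fin D) :=
  fderiv ℝ (fun θ' => grad2 f θ' β) θ

/-!
Write `v = β^⟨I⟩ - β#` and `H = ∇₂₂²s(θ, β#)`. Expanding `∇₁r(θ, ·)` and `∇₂s(θ, ·)` to first
order at `β#`, the remainders are at most `L₁₂ʳ/2 ‖v‖²` and `L₂₂ˢ/2 ‖v‖²` because the derivatives
of these maps are Lipschitz. Since `∇₂s(θ, β#(θ)) = 0` for all `θ`, differentiating gives
`∇₁₂²s = -H J#`; with the shared mixed derivative and the symmetry of `H`, the two first-order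
terms combine into `(J^⟨I⟩ - J#)ᵀ H v`, and `‖H‖ ≤ L₂ˢ` because `∇₂s(θ, ·)` is `L₂ˢ`-Lipschitz.
-/

open ContinuousLinearMap InnerProductSpace

section Calculus

variable {E F : Type*} [NormedAddCommGroup E] [NormedSpace ℝ E]
  [NormedAddCommGroup F] [NormedSpace ℝ F]

theorem norm_image_one_le_of_norm_deriv_le_mul {ψ ψ' : ℝ → F} {C : ℝ} (hψ₀ : ψ 0 = 0)
    (hψ : ∀ t, HasDerivAt ψ (ψ' t) t) (bound : ∀ t ∈ Set.Ico (0 : ℝ) 1, ‖ψ' t‖ ≤ C * t) :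
    ‖ψ 1‖ ≤ C / 2 := by
  have hB : ∀ t : ℝ, HasDerivAt (fun t : ℝ => C * t ^ 2 / 2) (C * t) t := fun t => by
    simpa [mul_comm, mul_left_comm, mul_div_assoc] using
      ((hasDerivAt_pow 2 t).const_mul C).div_const 2
  simpa using image_norm_le_of_norm_deriv_right_le_deriv_boundary (a := 0) (b := 1)
    (fun t _ => (hψ t).continuousAt.continuousWithinAt) (fun t _ => (hψ t).hasDerivWithinAt)
    (by simp [hψ₀]) hB bound (Set.right_mem_Icc.2 zero_le_one)

theorem norm_image_sub_sub_fderiv_le {g : E → F} {g' : E → E →L[ℝ] F}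
    (hg : ∀ x, HasFDerivAt g (g' x) x) {K : ℝ} {p : E} (hK : ∀ x, ‖g' x - g' p‖ ≤ K * ‖x - p‖)
    (b : E) : ‖g b - g p - g' p (b - p)‖ ≤ K / 2 * ‖b - p‖ ^ 2 := by
  set v := b - p
  have hψ : ∀ t : ℝ, HasDerivAt (fun t : ℝ => g (p + t • v) - t • g' p v - g p)
      (g' (p + t • v) v - g' p v) t := fun t => by
    have hline : HasDerivAt (fun t : ℝ => p + t • v) v t := by
      simpa using ((hasDerivAt_id t).smul_const v).const_add p
    simpa using (((hg _).comp_hasDerivAt t hline).sub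
      ((hasDerivAt_id t).smul_const (g' p v))).sub_const (g p)
  have bound : ∀ t ∈ Set.Ico (0 : ℝ) 1, ‖g' (p + t • v) v - g' p v‖ ≤ K * ‖v‖ ^ 2 * t := by
    intro t ht
    calc ‖g' (p + t • v) v - g' p v‖ ≤ ‖g' (p + t • v) - g' p‖ * ‖v‖ :=
          (g' (p + t • v) - g' p).le_opNorm v
      _ ≤ K * (t * ‖v‖) * ‖v‖ := by
          gcongr
          simpa [norm_smul, abs_of_nonneg ht.1] using hK (p + t • v)
      _ = K * ‖v‖ ^ 2 * t := by ring
  have := norm_image_one_le_of_norm_deriv_le_mul (by simp) hψ bound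
  simp only [one_smul, v, add_sub_cancel] at this
  convert this using 2
  · abel
  · ring

theorem HasFDerivAt.norm_apply_le_of_lip {f : E → F} {f' : E →L[ℝ] F} {x₀ : E} {C : ℝ}
    (hf : HasFDerivAt f f' x₀) (hlip : ∀ x, ‖f x - f x₀‖ ≤ C * ‖x - x₀‖) (v : E) :
    ‖f' v‖ ≤ C * ‖v‖ := by
  rcases eq_or_ne v 0 with rfl | hv
  · simp
  have hC : 0 ≤ C := by
    have := (norm_nonneg _).trans (hlip (x₀ + v))
    rw [add_sub_cancel_left] at this
    exact nonneg_of_mul_nonneg_left this (norm_pos_iff.2 hv)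
  exact (f'.le_opNorm v).trans (by gcongr; exact hf.le_of_lip' hC (.of_forall hlip))

end Calculus

theorem ContinuousLinearMap.norm_adjoint_apply_le {E F : Type*} [NormedAddCommGroup E]
    [InnerProductSpace ℝ E] [CompleteSpace E] [NormedAddCommGroup F] [InnerProductSpace ℝ F]
    [CompleteSpace F] (A : E →L[ℝ] F) (y : F) : ‖adjoint A y‖ ≤ ‖A‖ * ‖y‖ := by
  simpa only [LinearIsometryEquiv.norm_map] using (adjoint A).le_opNorm y

section GradPullback

variable {G H : Type*} [NormedAddCommGroup G] [InnerProductSpace ℝ G] [CompleteSpace G]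
  [NormedAddCommGroup H] [NormedSpace ℝ H]

noncomputable def gradPullback (ι : G →L[ℝ] H) : (H →L[ℝ] ℝ) →L[ℝ] G :=
  LinearMap.mkContinuous
    { toFun := fun B => (toDual ℝ G).symm (B ∘L ι)
      map_add' := fun A B => by simp [add_comp]
      map_smul' := fun c B => by simp [smul_comp] }
    ‖ι‖ fun B => by simpa [mul_comm] using opNorm_comp_le B ι

theorem gradPullback_apply (ι : G →L[ℝ] H) (B : H →L[ℝ] ℝ) :
    gradPullback ι B = (toDual ℝ G).symm (B ∘L ι) := rfl

@[simp]
theorem inner_gradPullback (ι : G →L[ℝ] H) (B : H →L[ℝ] ℝ) (u : G) :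
    ⟪gradPullback ι B, u⟫_ℝ = B (ι u) := by
  rw [gradPullback_apply, toDual_symm_apply, comp_apply]

theorem hasFDerivAt_gradPullback_fderiv {f : H → ℝ} (hf : ContDiff ℝ 2 f) (ι : G →L[ℝ] H)
    (q : H) : HasFDerivAt (fun q => gradPullback ι (fderiv ℝ f q))
      (gradPullback ι ∘L fderiv ℝ (fderiv ℝ f) q) q :=
  (gradPullback ι).hasFDerivAt.comp q
    (((hf.fderiv_right (m := 1) (by norm_num)).differentiable one_ne_zero) q).hasFDerivAt

end GradPullback

section PartialDerivatives

variable {L D : ℕ}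

local notation "E" => EuclideanSpace ℝ (Fin L)
local notation "F" => EuclideanSpace ℝ (Fin D)

theorem grad1_eq_gradPullback {f : E × F → ℝ} (hf : Differentiable ℝ f) (θ : E) (β : F) :
    grad1 f θ β = gradPullback (inl ℝ E F) (fderiv ℝ f (θ, β)) := by
  have hslice : HasFDerivAt (fun θ' => f (θ', β)) (fderiv ℝ f (θ, β) ∘L inl ℝ E F) θ :=
    (hf _).hasFDerivAt.comp θ (hasFDerivAt_prodMk_left θ β)
  rw [grad1, gradient, hslice.fderiv, gradPullback_apply]

theorem grad2_eq_gradPullback {f : E × F → ℝ} (hf : Differentiable ℝ f) (θ : E) (β : F) :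
    grad2 f θ β = gradPullback (inr ℝ E F) (fderiv ℝ f (θ, β)) := by
  have hslice : HasFDerivAt (fun β' => f (θ, β')) (fderiv ℝ f (θ, β) ∘L inr ℝ E F) β :=
    (hf _).hasFDerivAt.comp β (hasFDerivAt_prodMk_right θ β)
  rw [grad2, gradient, hslice.fderiv, gradPullback_apply]

theorem hasFDerivAt_uncurry_grad1 {f : E × F → ℝ} (hf : ContDiff ℝ 2 f) (q : E × F) :
    HasFDerivAt (fun q : E × F => grad1 f q.1 q.2)
      (gradPullback (inl ℝ E F) ∘L fderiv ℝ (fderiv ℝ f) q) q := by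
  refine (hasFDerivAt_gradPullback_fderiv hf (inl ℝ E F) q).congr_of_eventuallyEq
    (.of_forall fun q => ?_)
  exact grad1_eq_gradPullback (hf.differentiable two_ne_zero) q.1 q.2

theorem hasFDerivAt_uncurry_grad2 {f : E × F → ℝ} (hf : ContDiff ℝ 2 f) (q : E × F) :
    HasFDerivAt (fun q : E × F => grad2 f q.1 q.2)
      (gradPullback (inr ℝ E F) ∘L fderiv ℝ (fderiv ℝ f) q) q := by
  refine (hasFDerivAt_gradPullback_fderiv hf (inr ℝ E F) q).congr_of_eventuallyEq
    (.of_forall fun q => ?_)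
  exact grad2_eq_gradPullback (hf.differentiable two_ne_zero) q.1 q.2

theorem hess22_eq {f : E × F → ℝ} (hf : ContDiff ℝ 2 f) (θ : E) (β : F) :
    hess22 f θ β = gradPullback (inr ℝ E F) ∘L fderiv ℝ (fderiv ℝ f) (θ, β) ∘L inr ℝ E F :=
  ((hasFDerivAt_uncurry_grad2 hf (θ, β)).comp β (hasFDerivAt_prodMk_right θ β)).fderiv

theorem mixed12_eq {f : E × F → ℝ} (hf : ContDiff ℝ 2 f) (θ : E) (β : F) :
    mixed12 f θ β = gradPullback (inr ℝ E F) ∘L fderiv ℝ (fderiv ℝ f) (θ, β) ∘L inl ℝ E F := by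
  have hslice := HasFDerivAt.comp θ (g := fun q : E × F => grad2 f q.1 q.2)
    (f := fun θ' => (θ', β)) (hasFDerivAt_uncurry_grad2 hf (θ, β)) (hasFDerivAt_prodMk_left θ β)
  exact hslice.fderiv

theorem hasFDerivAt_grad2_right {f : E × F → ℝ} (hf : ContDiff ℝ 2 f) (θ : E) (β : F) :
    HasFDerivAt (grad2 f θ) (hess22 f θ β) β := by
  rw [hess22_eq hf]
  exact (hasFDerivAt_uncurry_grad2 hf (θ, β)).comp β (hasFDerivAt_prodMk_right θ β)

theorem isSelfAdjoint_hess22 {f : E × F → ℝ} (hf : ContDiff ℝ 2 f) (θ : E) (β : F) :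
    IsSelfAdjoint (hess22 f θ β) := by
  have hsymm := hf.contDiffAt.isSymmSndFDerivAt (x := (θ, β))
    (by simp [minSmoothness_of_isRCLikeNormedField])
  refine isSelfAdjoint_iff'.2 (ext fun w => ext_inner_right ℝ fun w' => ?_)
  rw [adjoint_inner_left, real_inner_comm]
  simpa [hess22_eq hf] using hsymm _ _

theorem adjoint_mixed12 {f : E × F → ℝ} (hf : ContDiff ℝ 2 f) (θ : E) (β : F) :
    adjoint (mixed12 f θ β) =
      gradPullback (inl ℝ E F) ∘L fderiv ℝ (fderiv ℝ f) (θ, β) ∘L inr ℝ E F := by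
  have hsymm := hf.contDiffAt.isSymmSndFDerivAt (x := (θ, β))
    (by simp [minSmoothness_of_isRCLikeNormedField])
  refine ext fun w => ext_inner_right ℝ fun u => ?_
  rw [adjoint_inner_left, real_inner_comm]
  simpa [mixed12_eq hf] using hsymm _ _

theorem hasFDerivAt_grad1_right {f : E × F → ℝ} (hf : ContDiff ℝ 2 f) (θ : E) (β : F) :
    HasFDerivAt (grad1 f θ) (adjoint (mixed12 f θ β)) β := by
  rw [adjoint_mixed12 hf]
  exact HasFDerivAt.comp β (g := fun q : E × F => grad1 f q.1 q.2)
    (hasFDerivAt_uncurry_grad1 hf (θ, β)) (hasFDerivAt_prodMk_right θ β)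

theorem mixed12_eq_neg_hess22_comp {f : E × F → ℝ} (hf : ContDiff ℝ 2 f) {βc : E → F}
    (hβc : Differentiable ℝ βc) (hcrit : ∀ θ, grad2 f θ (βc θ) = 0) (θ : E) :
    mixed12 f θ (βc θ) = -(hess22 f θ (βc θ) ∘L fderiv ℝ βc θ) := by
  have hchain := (hasFDerivAt_uncurry_grad2 hf (θ, βc θ)).comp θ
    ((hasFDerivAt_id θ).prodMk (hβc θ).hasFDerivAt)
  have hzero := hchain.unique <| (hasFDerivAt_const 0 θ).congr_of_eventuallyEq
    (.of_forall fun θ' => hcrit θ')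
  refine eq_neg_of_add_eq_zero_left (Eq.trans ?_ hzero)
  ext1 v
  simp [mixed12_eq hf, hess22_eq hf, ← map_add]

end PartialDerivatives

theorem stmt1_general {L D : ℕ}
    (r s : EuclideanSpace ℝ (Fin L) × EuclideanSpace ℝ (Fin D) → ℝ)
    (hr : ContDiff ℝ 2 r) (hs : ContDiff ℝ 2 s)
    (βsharp : EuclideanSpace ℝ (Fin L) → EuclideanSpace ℝ (Fin D))
    (hβsharp : Differentiable ℝ βsharp)
    (hcrit : ∀ θ', grad2 s θ' (βsharp θ') = 0)
    (θ : EuclideanSpace ℝ (Fin L))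
    (L2s L22s L12r : ℝ)
    (hLip2s : ∀ β β' : EuclideanSpace ℝ (Fin D),
      ‖grad2 s θ β - grad2 s θ β'‖ ≤ L2s * ‖β - β'‖)
    (hLip22s : ∀ β β' : EuclideanSpace ℝ (Fin D),
      ‖hess22 s θ β - hess22 s θ β'‖ ≤ L22s * ‖β - β'‖)
    (hLip12r : ∀ β β' : EuclideanSpace ℝ (Fin D),
      ‖mixed12 r θ β - mixed12 r θ β'‖ ≤ L12r * ‖β - β'‖)
    (hshare : mixed12 r θ (βsharp θ) = mixed12 s θ (βsharp θ))
    (βI : EuclideanSpace ℝ (Fin L) → EuclideanSpace ℝ (Fin D))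
    (JM : ℝ) (hJM : ‖fderiv ℝ βI θ‖ ≤ JM) :
    ‖(grad1 r θ (βI θ)
        + (ContinuousLinearMap.adjoint (fderiv ℝ βI θ)) (grad2 s θ (βI θ)))
      - grad1 r θ (βsharp θ)‖
      ≤ (L12r / 2 + JM * L22s / 2) * ‖βI θ - βsharp θ‖ ^ 2
        + L2s * ‖fderiv ℝ βI θ - fderiv ℝ βsharp θ‖ * ‖βI θ - βsharp θ‖ := by
  set p := βsharp θ
  set v := βI θ - p
  set J := fderiv ℝ βI θ
  set J' := fderiv ℝ βsharp θ
  set H := hess22 s θ p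
  have hr_taylor := norm_image_sub_sub_fderiv_le (hasFDerivAt_grad1_right hr θ) (p := p)
    (fun β => by simpa only [← map_sub, LinearIsometryEquiv.norm_map] using hLip12r β p) (βI θ)
  have hs_taylor := norm_image_sub_sub_fderiv_le (hasFDerivAt_grad2_right hs θ)
    (fun β => hLip22s β p) (βI θ)
  have hHv : ‖H v‖ ≤ L2s * ‖v‖ :=
    (hasFDerivAt_grad2_right hs θ p).norm_apply_le_of_lip (fun β => hLip2s β p) v
  have hfirst : adjoint (mixed12 r θ p) v = -adjoint J' (H v) := by
    rw [hshare, mixed12_eq_neg_hess22_comp hs hβsharp hcrit, map_neg, adjoint_comp,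
      (isSelfAdjoint_hess22 hs θ p).adjoint_eq]
    rfl
  have hsplit : grad1 r θ (βI θ) + adjoint J (grad2 s θ (βI θ)) - grad1 r θ p
      = (grad1 r θ (βI θ) - grad1 r θ p - adjoint (mixed12 r θ p) v)
        + adjoint J (grad2 s θ (βI θ) - grad2 s θ p - H v) + adjoint (J - J') (H v) := by
    rw [hfirst, hcrit θ]
    simp only [map_sub, sub_apply, map_zero]
    abel
  have hJM₀ : 0 ≤ JM := (norm_nonneg _).trans hJM
  rw [hsplit]
  calc _ ≤ L12r / 2 * ‖v‖ ^ 2 + JM * (L22s / 2 * ‖v‖ ^ 2) + ‖J - J'‖ * (L2s * ‖v‖) := by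
        refine norm_add₃_le.trans (add_le_add_three hr_taylor ?_ ?_)
        · exact (J.norm_adjoint_apply_le _).trans (by gcongr)
        · exact ((J - J').norm_adjoint_apply_le _).trans (by gcongr)
    _ = _ := by ring

/-- convergence of the automatic (network) gradient in bilevel optimization.
Under the stated smoothness, criticality, invertibility, Lipschitz, shared
second-derivative and bounded-Jacobian assumptions,
`‖g̃^⟨I⟩ − g#‖ ≤ (L₁₂ʳ/2 + J_M L₂₂ˢ/2)‖β^⟨I⟩ − β#‖² + L₂ˢ‖J^⟨I⟩ − J#‖‖β^⟨I⟩ − β#‖`. -/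
theorem stmt1 {L D : ℕ}
    (r s : EuclideanSpace ℝ (Fin L) × EuclideanSpace ℝ (Fin D) → ℝ)
    (hr : ContDiff ℝ 2 r) (hs : ContDiff ℝ 2 s)
    (βsharp : EuclideanSpace ℝ (Fin L) → EuclideanSpace ℝ (Fin D))
    (hβsharp : Differentiable ℝ βsharp)
    (hcrit : ∀ θ', grad2 s θ' (βsharp θ') = 0)
    (θ : EuclideanSpace ℝ (Fin L))
    (hinv : IsUnit (hess22 s θ (βsharp θ)))
    (L2s L22s L12r : ℝ)
    (hLip2s : ∀ β β' : EuclideanSpace ℝ (Fin D),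
      ‖grad2 s θ β - grad2 s θ β'‖ ≤ L2s * ‖β - β'‖)
    (hLip22s : ∀ β β' : EuclideanSpace ℝ (Fin D),
      ‖hess22 s θ β - hess22 s θ β'‖ ≤ L22s * ‖β - β'‖)
    (hLip12r : ∀ β β' : EuclideanSpace ℝ (Fin D),
      ‖mixed12 r θ β - mixed12 r θ β'‖ ≤ L12r * ‖β - β'‖)
    (hshare : mixed12 r θ (βsharp θ) = mixed12 s θ (βsharp θ))
    (βI : EuclideanSpace ℝ (Fin L) → EuclideanSpace ℝ (Fin D))
    (hβI : Differentiable ℝ βI)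
    (JM : ℝ) (hJM : ‖fderiv ℝ βI θ‖ ≤ JM) :
    ‖(grad1 r θ (βI θ)
        + (ContinuousLinearMap.adjoint (fderiv ℝ βI θ)) (grad2 s θ (βI θ)))
      - grad1 r θ (βsharp θ)‖
      ≤ (L12r / 2 + JM * L22s / 2) * ‖βI θ - βsharp θ‖ ^ 2
        + L2s * ‖fderiv ℝ βI θ - fderiv ℝ βsharp θ‖ * ‖βI θ - βsharp θ‖ :=
  stmt1_general r s hr hs βsharp hβsharp hcrit θ L2s L22s L12r hLip2s hLip22s hLip12r hshare βI JM
    hJM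
end

section
/- Let A : ℝ^L → ℝ^{D×D} and u : ℝ^L → ℝ^D be differentiable, with A_θ invertible for all θ, fix a step size α ∈ ℝ, and define the gradient-descent iterates β^⟨0⟩(θ) := 0 and β^⟨I+1⟩(θ) := β^⟨I⟩(θ) − α(A_θ β^⟨I⟩(θ) − u_θ), together with β#(θ) := A_θ^{-1} u_θ. Let e^⟨I⟩(θ) := β^⟨I⟩(θ) − β#(θ) and, for a coordinate θ_ℓ, let B^⟨I⟩ := ∂e^⟨I⟩/∂θ_ℓ. Then each β^⟨I⟩ is differentiable and the Jacobian error satisfies the recursion B^⟨I+1⟩ = (I − α A_θ) B^⟨I⟩ − α (∂A_θ/∂θ_ℓ) e^⟨I⟩. -/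
/-!
Since `A_θ β# = u_θ`, the error obeys `e^⟨I+1⟩ = e^⟨I⟩ - α A_θ e^⟨I⟩`, and the recursion is the
product rule for `θ ↦ A_θ e^⟨I⟩(θ)`. Matrices are handled as continuous linear endomorphisms of
Euclidean space through `Matrix.toEuclideanCLM`: there `θ ↦ A_θ` is a finite sum of its entries
times constant operators, hence differentiable, and it takes values in a complete normed algebra,
where inversion is differentiable at units; this gives the differentiability of `β#`.
-/

theorem map_ringInverse {M N F : Type*} [MonoidWithZero M] [MonoidWithZero N]
    [EquivLike F M N] [MulEquivClass F M N] (f : F) (a : M) :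
    f (Ring.inverse a) = Ring.inverse (f a) := by
  by_cases ha : IsUnit a
  · obtain ⟨a, rfl⟩ := ha
    have : f a = Units.map (f : M →* N) a := rfl
    rw [this, Ring.inverse_unit, Ring.inverse_unit]
    rfl
  · rw [Ring.inverse_non_unit _ ha, Ring.inverse_non_unit _ ((MulEquiv.isUnit_map f).not.mpr ha),
      map_zero]

section MatrixValued

open Matrix

variable {𝕜 E n : Type*} [RCLike 𝕜] [NormedAddCommGroup E] [NormedSpace 𝕜 E]
  [Fintype n] [DecidableEq n] {A : E → Matrix n n 𝕜} {x : E}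

theorem Matrix.toEuclideanCLM_eq_sum_single (M : Matrix n n 𝕜) :
    toEuclideanCLM (𝕜 := 𝕜) M = ∑ i, ∑ j, M i j • toEuclideanCLM (𝕜 := 𝕜) (single i j 1) := by
  conv_lhs => rw [matrix_eq_sum_single M]
  simp only [map_sum, ← map_smul, smul_single, smul_eq_mul, mul_one]

theorem hasFDerivAt_toEuclideanCLM {A' : n → n → E →L[𝕜] 𝕜}
    (h : ∀ i j, HasFDerivAt (fun y => A y i j) (A' i j) x) :
    HasFDerivAt (fun y => toEuclideanCLM (𝕜 := 𝕜) (A y))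
      (∑ i, ∑ j, (A' i j).smulRight (toEuclideanCLM (𝕜 := 𝕜) (single i j 1))) x := by
  simp_rw [toEuclideanCLM_eq_sum_single (A _)]
  exact HasFDerivAt.fun_sum fun i _ => HasFDerivAt.fun_sum fun j _ =>
    (h i j).smul_const (toEuclideanCLM (𝕜 := 𝕜) (single i j 1))

theorem fderiv_toEuclideanCLM_apply (h : ∀ i j, DifferentiableAt 𝕜 (fun y => A y i j) x) (v : E) :
    fderiv 𝕜 (fun y => toEuclideanCLM (𝕜 := 𝕜) (A y)) x v =
      toEuclideanCLM (𝕜 := 𝕜) (of fun i j => fderiv 𝕜 (fun y => A y i j) x v) := by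
  rw [(hasFDerivAt_toEuclideanCLM fun i j => (h i j).hasFDerivAt).fderiv,
    toEuclideanCLM_eq_sum_single (of _)]
  simp only [FunLike.coe_sum, Finset.sum_apply, ContinuousLinearMap.smulRight_apply, of_apply]

theorem differentiableAt_toEuclideanCLM (h : ∀ i j, DifferentiableAt 𝕜 (fun y => A y i j) x) :
    DifferentiableAt 𝕜 (fun y => toEuclideanCLM (𝕜 := 𝕜) (A y)) x :=
  (hasFDerivAt_toEuclideanCLM fun i j => (h i j).hasFDerivAt).differentiableAt

theorem differentiableAt_toEuclideanCLM_inv (h : ∀ i j, DifferentiableAt 𝕜 (fun y => A y i j) x)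
    (hx : IsUnit (A x)) : DifferentiableAt 𝕜 (fun y => toEuclideanCLM (𝕜 := 𝕜) (A y)⁻¹) x := by
  simp_rw [nonsing_inv_eq_ringInverse, map_ringInverse]
  exact (differentiableAt_inverse (hx.map _)).comp x (differentiableAt_toEuclideanCLM h)

end MatrixValued

section GradientDescent

variable {𝕜 E F : Type*} [NontriviallyNormedField 𝕜] [NormedAddCommGroup E] [NormedSpace 𝕜 E]
  [NormedAddCommGroup F] [NormedSpace 𝕜 F] {T : E → F →L[𝕜] F} {u : E → F} {α : 𝕜}
  {β : ℕ → E → F}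

theorem differentiable_gradientDescent_iterate (hT : Differentiable 𝕜 T)
    (hu : Differentiable 𝕜 u) (h0 : Differentiable 𝕜 (β 0))
    (hs : ∀ I y, β (I + 1) y = β I y - α • (T y (β I y) - u y)) (I : ℕ) :
    Differentiable 𝕜 (β I) := by
  induction I with
  | zero => exact h0
  | succ I ih =>
    rw [funext (hs I)]
    exact ih.sub (((hT.clm_apply ih).sub hu).const_smul α)

theorem fderiv_gradientDescent_error_succ {βs : E → F} {x : E} {I : ℕ}
    (hT : DifferentiableAt 𝕜 T x) (hβ : DifferentiableAt 𝕜 (β I) x)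
    (hβs : DifferentiableAt 𝕜 βs x)
    (hs : ∀ y, β (I + 1) y = β I y - α • (T y (β I y) - u y))
    (hsol : ∀ y, T y (βs y) = u y) (v : E) :
    fderiv 𝕜 (fun y => β (I + 1) y - βs y) x v =
      (1 - α • T x) (fderiv 𝕜 (fun y => β I y - βs y) x v)
        - α • fderiv 𝕜 T x v (β I x - βs x) := by
  have he : DifferentiableAt 𝕜 (fun y => β I y - βs y) x := hβ.sub hβs
  have herr : (fun y => β (I + 1) y - βs y) =
      fun y => (β I y - βs y) - α • T y (β I y - βs y) := by
    funext y
    rw [hs, map_sub, hsol]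
    abel
  rw [herr, fderiv_fun_sub he ((hT.clm_apply he).fun_const_smul α),
    fderiv_fun_const_smul (hT.clm_apply he), fderiv_clm_apply hT he]
  simp only [sub_apply, smul_apply, add_apply,
    ContinuousLinearMap.comp_apply, ContinuousLinearMap.flip_apply,
    one_apply_eq_self, smul_add]
  abel

end GradientDescent

/-- the Jacobian error of unrolled gradient descent on the quadratic
`½βᵀA_θβ − u_θᵀβ` satisfies the recursion
`B^⟨I+1⟩ = (I − αA_θ) B^⟨I⟩ − α (∂A_θ/∂θ_ℓ) e^⟨I⟩`, where `e^⟨I⟩ = β^⟨I⟩ − β#` and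
`B^⟨I⟩ = ∂e^⟨I⟩/∂θ_ℓ`. -/
theorem stmt17 {L D : ℕ}
    (A : EuclideanSpace ℝ (Fin L) → Matrix (Fin D) (Fin D) ℝ)
    (u : EuclideanSpace ℝ (Fin L) → EuclideanSpace ℝ (Fin D))
    (hA : ∀ i j, Differentiable ℝ fun θ' => A θ' i j)
    (hu : Differentiable ℝ u)
    (hinv : ∀ θ', IsUnit (A θ'))
    (α : ℝ)
    (βit : ℕ → EuclideanSpace ℝ (Fin L) → EuclideanSpace ℝ (Fin D))
    (hβ0 : ∀ θ', βit 0 θ' = 0)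
    (hβs : ∀ (I : ℕ) θ', βit (I + 1) θ' =
      βit I θ' - α • (Matrix.toEuclideanLin (A θ') (βit I θ') - u θ'))
    (βsharp : EuclideanSpace ℝ (Fin L) → EuclideanSpace ℝ (Fin D))
    (hβsharp : ∀ θ', βsharp θ' = Matrix.toEuclideanLin (A θ')⁻¹ (u θ'))
    (θ : EuclideanSpace ℝ (Fin L)) (ℓ : Fin L)
    (A' : Matrix (Fin D) (Fin D) ℝ)
    (hA' : ∀ i j, A' i j =
      fderiv ℝ (fun θ' => A θ' i j) θ (EuclideanSpace.single ℓ (1 : ℝ))) :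
    (∀ I : ℕ, Differentiable ℝ (βit I)) ∧
    ∀ I : ℕ,
      fderiv ℝ (fun θ' => βit (I + 1) θ' - βsharp θ') θ (EuclideanSpace.single ℓ (1 : ℝ))
        = Matrix.toEuclideanLin ((1 : Matrix (Fin D) (Fin D) ℝ) - α • A θ)
            (fderiv ℝ (fun θ' => βit I θ' - βsharp θ') θ (EuclideanSpace.single ℓ (1 : ℝ)))
          - α • Matrix.toEuclideanLin A' (βit I θ - βsharp θ) := by
  set T := fun θ' => Matrix.toEuclideanCLM (𝕜 := ℝ) (A θ') with hTdef
  have hT : Differentiable ℝ T := fun θ' => differentiableAt_toEuclideanCLM fun i j => hA i j θ'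
  have hsharp : Differentiable ℝ βsharp := by
    rw [funext hβsharp]
    exact fun θ' =>
      (differentiableAt_toEuclideanCLM_inv (fun i j => hA i j θ') (hinv θ')).clm_apply (hu θ')
  have hsol (θ') : T θ' (βsharp θ') = u θ' := by
    rw [hβsharp, ← Matrix.coe_toEuclideanCLM_eq_toEuclideanLin, ContinuousLinearMap.coe_coe,
      ← mul_apply_eq_comp, ← map_mul,
      Matrix.mul_nonsing_inv _ ((A θ').isUnit_iff_isUnit_det.mp (hinv θ')), map_one,
      one_apply_eq_self]
  -- `hβs` is stated with `toEuclideanLin`, which is definitionally the underlying map of `T θ'`.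
  have hdiff := differentiable_gradientDescent_iterate hT hu
    (by rw [funext hβ0]; exact differentiable_const 0) hβs
  refine ⟨hdiff, fun I => ?_⟩
  have hA'_eq :
      Matrix.of (fun i j => fderiv ℝ (fun θ' => A θ' i j) θ (EuclideanSpace.single ℓ 1)) = A' :=
    Matrix.ext fun i j => (hA' i j).symm
  rw [fderiv_gradientDescent_error_succ (hT θ) (hdiff I θ) (hsharp θ) (hβs I) hsol,
    hTdef, fderiv_toEuclideanCLM_apply fun i j => hA i j θ, hA'_eq]
  simp only [← Matrix.coe_toEuclideanCLM_eq_toEuclideanLin, map_sub, map_smul, map_one]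
  rfl
end
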